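/- Let Q be a split quaternion algebra over a field k of characteristic not 2 (so Q ≅ M₂(k)), with canonical symplectic involution γ. Then every nondegenerate anti-hermitian form over (Q, γ) of reduced dimension 2 corresponds, under the Morita equivalence induced by a rank-1 ideal Qz₀ (z₀ a nonzero pure quaternion with z₀² = 0) and the form b_{z₀}, to a nondegenerate 2-dimensional symmetric bilinear form over k; and in particular the elementary form ⟨z⟩_γ for an invertible pure quaternion z maps to a binary form of determinant class z²·(k×)² and, when Trd(z z₀) ≠ 0, Witt class ⟨−Trd(z z₀)⟩·⟨1, z²⟩. -/

import Mathlib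

/-!
Since `z₀² = 0`, right multiplication by `z₀` squares to zero on the 4-dimensional algebra `Q`,
so `Qz₀` has dimension at most 2. For pure `z` we have `z² = n ∈ k` and `γ(z) = -z`, hence the
transferred form `B` satisfies `B(zx, y) = -B(x, zy)` and `B(u, zu) = -2n·Nrd(u)·re(z₀) = 0`.
So on the pair `(u z₀, z u z₀)` its Gram matrix is `diag(β, -nβ)` with `β = B(u, u)`, and as soon
as `β ≠ 0` this pair is an orthogonal basis of `Qz₀` of determinant `-nβ²`. Such a `u` exists
because `B` is symmetric and nonzero (the trace form is nondegenerate and `z` is invertible) and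
`2` is invertible; `u = 1` gives the diagonalization, since `B(1, 1) = -Trd(z z₀)`.
-/

open Quaternion

theorem LinearMap.two_mul_finrank_range_le_of_comp_self_eq_zero {K V : Type*} [Field K]
    [AddCommGroup V] [Module K V] [FiniteDimensional K V] (f : V →ₗ[K] V) (hf : f ∘ₗ f = 0) :
    2 * Module.finrank K (LinearMap.range f) ≤ Module.finrank K V := by
  have hle : Module.finrank K (LinearMap.range f) ≤ Module.finrank K (LinearMap.ker f) :=
    Submodule.finrank_mono (LinearMap.range_le_ker_iff.mpr hf)
  have := LinearMap.finrank_range_add_finrank_ker f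
  omega

theorem Submodule.span_pair_eq_of_finrank_le_two {K V : Type*} [Field K] [AddCommGroup V]
    [Module K V] [FiniteDimensional K V] {W : Submodule K V} (hW : Module.finrank K W ≤ 2)
    {x y : V} (hx : x ∈ W) (hy : y ∈ W) (hxy : LinearIndependent K ![x, y]) :
    Submodule.span K {x, y} = W := by
  have hspan : Module.finrank K (Submodule.span K {x, y}) = 2 := by
    rw [← Matrix.range_cons_cons_empty x y ![], finrank_span_eq_card hxy, Fintype.card_fin]
  refine Submodule.eq_of_le_of_finrank_le ?_ (hW.trans hspan.ge)
  rw [Submodule.span_le, Set.insert_subset_iff, Set.singleton_subset_iff]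
  exact ⟨hx, hy⟩

namespace QuaternionAlgebra

variable {k : Type} [Field k] {a b : k}

theorem re_mul_comm (x y : ℍ[k,a,b]) : (x * y).re = (y * x).re := by
  simp only [re_mul]; ring

theorem mul_self_eq_coe_of_re_eq_zero {x : ℍ[k,a,b]} (hx : x.re = 0) :
    x * x = ((x * x).re : ℍ[k,a,b]) := by
  ext <;> simp [hx] <;> ring

theorem star_eq_neg_of_re_eq_zero {x : ℍ[k,a,b]} (hx : x.re = 0) : star x = -x := by
  ext <;> simp [hx]

theorem re_mul_star_mul_self_eq_zero {x : ℍ[k,a,b]} (hx : x.re = 0) (y : ℍ[k,a,b]) :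
    (x * (star y * y)).re = 0 := by
  rw [star_mul_eq_coe, mul_coe_eq_smul, re_smul, hx, smul_zero]

theorem exists_re_mul_ne_zero (ha : a ≠ 0) (hb : b ≠ 0) {x : ℍ[k,a,b]} (hx : x ≠ 0) :
    ∃ m : ℍ[k,a,b], (x * m).re ≠ 0 := by
  by_contra! h
  have h1 := h 1
  have hi := h ⟨0, 1, 0, 0⟩
  have hj := h ⟨0, 0, 1, 0⟩
  have hk := h ⟨0, 0, 0, 1⟩
  simp [re_mul, ha, hb] at h1 hi hj hk
  exact hx (QuaternionAlgebra.ext h1 hi hj hk)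

theorem finrank_range_mulRight_le_two {z₀ : ℍ[k,a,b]} (hsq : z₀ * z₀ = 0) :
    Module.finrank k (LinearMap.range (LinearMap.mulRight k z₀)) ≤ 2 := by
  have := (LinearMap.mulRight k z₀).two_mul_finrank_range_le_of_comp_self_eq_zero
    (LinearMap.ext fun x => by simp [mul_assoc, hsq])
  rw [finrank_eq_four] at this
  omega

theorem span_pair_eq_range_mulRight {z₀ : ℍ[k,a,b]} (hsq : z₀ * z₀ = 0) {x y : ℍ[k,a,b]}
    (hx : x ∈ LinearMap.range (LinearMap.mulRight k z₀))
    (hy : y ∈ LinearMap.range (LinearMap.mulRight k z₀)) (hxy : LinearIndependent k ![x, y]) :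
    Submodule.span k {x, y} = LinearMap.range (LinearMap.mulRight k z₀) :=
  Submodule.span_pair_eq_of_finrank_le_two (finrank_range_mulRight_le_two hsq) hx hy hxy

theorem re_mul_self_ne_zero {z : ℍ[k,a,b]} (hz : z.re = 0) (hu : IsUnit z) :
    (z * z).re ≠ 0 := by
  intro h
  apply (hu.mul hu).ne_zero
  rw [mul_self_eq_coe_of_re_eq_zero hz, h, coe_zero]

/-- The transfer `b_{z₀,z}` of `⟨z⟩_γ` along the ideal `Qz₀`, written as a form on `Q`:
`moritaTransfer z₀ z x y` is the value of `b_{z₀,z}` at `(x z₀, y z₀)`. -/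
def moritaTransfer (z₀ z : ℍ[k,a,b]) : LinearMap.BilinForm k ℍ[k,a,b] :=
  LinearMap.mk₂ k (fun x y => -(2 * (z₀ * star x * z * y).re))
    (fun x₁ x₂ y => by simp only [star_add, mul_add, add_mul, re_add]; ring)
    (fun c x y => by
      simp only [star_smul, mul_smul_comm, smul_mul_assoc, re_smul, smul_eq_mul]; ring)
    (fun x y₁ y₂ => by simp only [mul_add, re_add]; ring)
    (fun c x y => by simp only [mul_smul_comm, re_smul, smul_eq_mul]; ring)

section moritaTransfer

variable {z₀ z : ℍ[k,a,b]}

theorem moritaTransfer_apply (x y : ℍ[k,a,b]) :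
    moritaTransfer z₀ z x y = -(2 * (z₀ * star x * z * y).re) := rfl

theorem moritaTransfer_one_left (y : ℍ[k,a,b]) :
    moritaTransfer z₀ z 1 y = -(2 * (z₀ * z * y).re) := by
  rw [moritaTransfer_apply, star_one, mul_one]

theorem moritaTransfer_eq_zero_of_mul_eq_zero {v : ℍ[k,a,b]} (hv : v * z₀ = 0)
    (x : ℍ[k,a,b]) :
    moritaTransfer z₀ z x v = 0 := by
  rw [moritaTransfer_apply, re_mul_comm, ← mul_assoc, ← mul_assoc, hv]
  simp

theorem moritaTransfer_isSymm (hz₀ : z₀.re = 0) (hz : z.re = 0) :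
    LinearMap.IsSymm (moritaTransfer z₀ z) := by
  refine ⟨fun x y => ?_⟩
  have hstar : star (z₀ * star x * z * y) = star y * z * x * z₀ := by
    simp only [star_mul, star_star, star_eq_neg_of_re_eq_zero hz₀, star_eq_neg_of_re_eq_zero hz,
      mul_neg, neg_mul, neg_neg, mul_assoc]
  have hre (q : ℍ[k,a,b]) : (star q).re = q.re := by rw [re_star, zero_mul, add_zero]
  simp only [RingHom.id_apply, moritaTransfer_apply]
  rw [← hre (z₀ * star x * z * y), hstar, re_mul_comm, ← mul_assoc, ← mul_assoc]

theorem moritaTransfer_ne_zero (h2 : (2 : k) ≠ 0) (ha : a ≠ 0) (hb : b ≠ 0) (hz₀ : z₀ ≠ 0)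
    (hz : IsUnit z) : moritaTransfer z₀ z ≠ 0 := by
  obtain ⟨m, hm⟩ := exists_re_mul_ne_zero ha hb hz₀
  intro h
  have h₀ : moritaTransfer z₀ z 1 (↑hz.unit⁻¹ * m) = 0 := by rw [h]; rfl
  rw [moritaTransfer_one_left, mul_assoc, ← mul_assoc z, hz.mul_val_inv, one_mul] at h₀
  exact mul_ne_zero h2 hm (neg_eq_zero.mp h₀)

theorem exists_moritaTransfer_self_ne_zero (h2 : (2 : k) ≠ 0) (ha : a ≠ 0) (hb : b ≠ 0)
    (hz₀ : z₀ ≠ 0) (hp₀ : z₀.re = 0) (hz : z.re = 0) (hzu : IsUnit z) :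
    ∃ u, moritaTransfer z₀ z u u ≠ 0 :=
  letI := invertibleOfNonzero h2
  LinearMap.BilinForm.exists_bilinForm_self_ne_zero (moritaTransfer_ne_zero h2 ha hb hz₀ hzu)
    (moritaTransfer_isSymm hp₀ hz)

theorem moritaTransfer_mul_left_eq_neg (hz : z.re = 0) (x y : ℍ[k,a,b]) :
    moritaTransfer z₀ z (z * x) y = -moritaTransfer z₀ z x (z * y) := by
  simp only [moritaTransfer_apply, star_mul, star_eq_neg_of_re_eq_zero hz, mul_neg,
    neg_mul, mul_assoc, re_neg]

theorem moritaTransfer_mul_right_mul_right (hz : z.re = 0) (x y : ℍ[k,a,b]) :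
    moritaTransfer z₀ z x (z * (z * y)) = (z * z).re * moritaTransfer z₀ z x y := by
  rw [← mul_assoc z z y, mul_self_eq_coe_of_re_eq_zero hz, coe_mul_eq_smul, map_smul,
    smul_eq_mul, re_coe]

theorem moritaTransfer_self_mul_left (hz₀ : z₀.re = 0) (hz : z.re = 0) (u : ℍ[k,a,b]) :
    moritaTransfer z₀ z u (z * u) = 0 := by
  rw [moritaTransfer_apply, mul_assoc, ← mul_assoc z z u, mul_self_eq_coe_of_re_eq_zero hz,
    coe_mul_eq_smul, mul_smul_comm, re_smul, mul_assoc, re_mul_star_mul_self_eq_zero hz₀]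
  simp

theorem moritaTransfer_mul_left_self (hz₀ : z₀.re = 0) (hz : z.re = 0) (u : ℍ[k,a,b]) :
    moritaTransfer z₀ z (z * u) u = 0 := by
  rw [← (moritaTransfer_isSymm hz₀ hz).eq u, RingHom.id_apply,
    moritaTransfer_self_mul_left hz₀ hz]

theorem moritaTransfer_mul_left_mul_left (hz : z.re = 0) (u : ℍ[k,a,b]) :
    moritaTransfer z₀ z (z * u) (z * u) = -((z * z).re * moritaTransfer z₀ z u u) := by
  rw [moritaTransfer_mul_left_eq_neg hz, moritaTransfer_mul_right_mul_right hz]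

theorem linearIndependent_mul_pair_of_moritaTransfer_ne_zero (hz₀ : z₀.re = 0) (hz : z.re = 0)
    (hn : (z * z).re ≠ 0) {u : ℍ[k,a,b]} (hu : moritaTransfer z₀ z u u ≠ 0) :
    LinearIndependent k ![u * z₀, z * u * z₀] := by
  rw [LinearIndependent.pair_iff]
  intro s t hst
  have hv : (s • u + t • (z * u)) * z₀ = 0 := by
    rwa [add_mul, smul_mul_assoc, smul_mul_assoc]
  have h₁ := moritaTransfer_eq_zero_of_mul_eq_zero (z := z) hv u
  have h₂ := moritaTransfer_eq_zero_of_mul_eq_zero (z := z) hv (z * u)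
  simp only [map_add, map_smul, smul_eq_mul, moritaTransfer_self_mul_left hz₀ hz,
    moritaTransfer_mul_left_self hz₀ hz, moritaTransfer_mul_left_mul_left hz] at h₁ h₂
  have hs : s * moritaTransfer z₀ z u u = 0 := by linear_combination h₁
  have ht : t * ((z * z).re * moritaTransfer z₀ z u u) = 0 := by linear_combination -h₂
  exact ⟨(mul_eq_zero.mp hs).resolve_right hu,
    (mul_eq_zero.mp ht).resolve_right (mul_ne_zero hn hu)⟩

end moritaTransfer

end QuaternionAlgebra

open QuaternionAlgebra

/-- Let `Q = ℍ[k,a,b]` be a split quaternion algebra over a field `k`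
of characteristic not 2 (splitness witnessed by a nonzero pure quaternion `z₀` with
`z₀² = 0`), with canonical symplectic involution `γ = star`. Every nondegenerate
anti-hermitian form of reduced dimension 2 over `(Q,γ)` is an elementary form `⟨z⟩_γ`
with `z` an invertible pure (skew) quaternion; under the Morita equivalence induced by
the rank-1 ideal `Qz₀` and the form `b_{z₀}`, it corresponds to the symmetric bilinear
form `b(z₁z₀,z₂z₀) = −Trd(z₀ γ(z₁) z z₂)` on the 2-dimensional space `Qz₀`
(with `Trd q = 2*q.re`), which is nondegenerate of (signed) determinant class
`z²·(k×)²`; and when `Trd(z z₀) ≠ 0` it has, in the orthogonal basis `(z₀, z z₀)`,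
the diagonalization `⟨−Trd(z z₀)⟩ ⊗ ⟨1, z²⟩`. -/
theorem stmt19 (k : Type) [Field k] (h2 : (2 : k) ≠ 0) (a b : k) (ha : a ≠ 0) (hb : b ≠ 0)
    (z₀ : ℍ[k, a, b]) (hz₀ : z₀ ≠ 0) (hp₀ : z₀.re = 0) (hsq : z₀ ^ 2 = 0) :
    ∀ z : ℍ[k, a, b], z.re = 0 → IsUnit z →
      -- the corresponding binary symmetric bilinear form is nondegenerate,
      -- of signed determinant class z²·(k×)²
      (∃ u w : ℍ[k, a, b],
        LinearIndependent k ![u * z₀, w * z₀] ∧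
        Submodule.span k {u * z₀, w * z₀} = LinearMap.range (LinearMap.mulRight k z₀) ∧
        (-(2 * (z₀ * star u * z * w).re) = -(2 * (z₀ * star w * z * u).re)) ∧
        ((-(2 * (z₀ * star u * z * u).re)) * (-(2 * (z₀ * star w * z * w).re))
            - (-(2 * (z₀ * star u * z * w).re)) * (-(2 * (z₀ * star w * z * u).re)) ≠ 0) ∧
        (∃ c : k, c ≠ 0 ∧
          -((-(2 * (z₀ * star u * z * u).re)) * (-(2 * (z₀ * star w * z * w).re))
              - (-(2 * (z₀ * star u * z * w).re)) * (-(2 * (z₀ * star w * z * u).re)))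
            = (z ^ 2).re * c ^ 2)) ∧
      -- when Trd(z z₀) ≠ 0, Witt class ⟨−Trd(z z₀)⟩ ⊗ ⟨1, z²⟩ in the basis (z₀, z·z₀)
      (2 * (z * z₀).re ≠ 0 →
        LinearIndependent k ![z₀, z * z₀] ∧
        Submodule.span k {z₀, z * z₀} = LinearMap.range (LinearMap.mulRight k z₀) ∧
        -(2 * (z₀ * z * z).re) = 0 ∧
        -(2 * (z₀ * z).re) = -(2 * (z * z₀).re) ∧
        -(2 * (z₀ * star z * z * z).re) = (2 * (z * z₀).re) * (z ^ 2).re) := by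
  intro z hz hzu
  rw [sq] at hsq ⊢
  have hn := re_mul_self_ne_zero hz hzu
  set B := moritaTransfer z₀ z
  refine ⟨?_, fun hT => ?_⟩
  · obtain ⟨u, hu⟩ := exists_moritaTransfer_self_ne_zero h2 ha hb hz₀ hp₀ hz hzu
    have hli := linearIndependent_mul_pair_of_moritaTransfer_ne_zero hp₀ hz hn hu
    have h₁₂ := moritaTransfer_self_mul_left hp₀ hz u
    have h₂₁ := moritaTransfer_mul_left_self hp₀ hz u
    have h₂₂ := moritaTransfer_mul_left_mul_left (z₀ := z₀) hz u
    refine ⟨u, z * u, hli, span_pair_eq_range_mulRight hsq ⟨u, rfl⟩ ⟨z * u, rfl⟩ hli,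
      ?_, ?_, B u u, hu, ?_⟩
    · change B u (z * u) = B (z * u) u
      rw [h₁₂, h₂₁]
    · change B u u * B (z * u) (z * u) - B u (z * u) * B (z * u) u ≠ 0
      rw [h₁₂, h₂₁, h₂₂, mul_zero, sub_zero, mul_neg, neg_ne_zero]
      exact mul_ne_zero hu (mul_ne_zero hn hu)
    · change -(B u u * B (z * u) (z * u) - B u (z * u) * B (z * u) u) = _
      rw [h₁₂, h₂₁, h₂₂]
      ring
  · have h₁₁ : B 1 1 = -(2 * (z * z₀).re) := by
      rw [moritaTransfer_one_left, mul_one, re_mul_comm]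
    have h₁₂ := moritaTransfer_self_mul_left hp₀ hz 1
    have h₂₂ := moritaTransfer_mul_left_mul_left (z₀ := z₀) hz 1
    rw [mul_one] at h₁₂ h₂₂
    have hli := linearIndependent_mul_pair_of_moritaTransfer_ne_zero hp₀ hz hn
      (h₁₁ ▸ neg_ne_zero.mpr hT)
    rw [one_mul, mul_one] at hli
    refine ⟨hli, span_pair_eq_range_mulRight hsq ⟨1, one_mul z₀⟩ ⟨z, rfl⟩ hli,
      ?_, ?_, ?_⟩
    · rwa [moritaTransfer_one_left] at h₁₂
    · rw [re_mul_comm]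
    · change B z z = _
      rw [h₂₂, h₁₁]
      ring
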